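/- Every subgroup of PGL(2,ℤ) of order 4 is conjugate in PGL(2,ℤ) to the subgroup G₄ generated by [S] and [N]; that is, for every subgroup H of PGL(2,ℤ) with exactly 4 elements there exists g ∈ PGL(2,ℤ) such that g H g⁻¹ = G₄. -/

import Mathlib

open Matrix

abbrev GL2Z := GL (Fin 2) ℤ

/-- PGL(2,ℤ): the quotient of GL(2,ℤ) by its center {I, -I}. -/
abbrev PGL2Z := GL2Z ⧸ Subgroup.center GL2Z

/-- The image of a matrix in PGL(2,ℤ). -/
def cls (M : GL2Z) : PGL2Z := QuotientGroup.mk M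

def Smat : GL2Z := ⟨!![0,1;1,0], !![0,1;1,0], by decide, by decide⟩
def Nmat : GL2Z := ⟨!![-1,0;0,1], !![-1,0;0,1], by decide, by decide⟩
def Tmat : GL2Z := ⟨!![0,-1;1,0], !![0,1;-1,0], by decide, by decide⟩
def Umat : GL2Z := ⟨!![0,-1;1,1], !![1,1;-1,0], by decide, by decide⟩

/-!
The determinant descends to `PGL(2,ℤ) → ℤˣ`; its kernel meets `H` in a subgroup of index at most
2, which by Cauchy's theorem contains an involution `a`. A lift `M ∈ GL(2,ℤ)` of `a` has
determinant 1 and `M² = ±1`; `M² = 1` would force `M = ±1`, so `M² = -1`. A Euclidean descent on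
the lower-left entry (conjugating by translations `[[1,k],[0,1]]` and by `S`) conjugates `M` to
`T = [[0,-1],[1,0]]`. A group of order 4 is abelian, so the conjugate of `H` lies in the
centralizer of `[T]`. A matrix commuting with `T` up to sign is `±1`, `±T`, `±S` or `±N`, hence
this centralizer is `{1, [S], [N], [T]} = G₄`, and counting gives equality.
-/

section FinTwo

variable {R : Type*} [CommRing R] [LinearOrder R] [IsStrictOrderedRing R]
  {A : Matrix (Fin 2) (Fin 2) R}

lemma Matrix.fin_two_entries_of_mul_self_eq_neg_one (h : A * A = -1) :
    A 1 1 = -A 0 0 ∧ A 0 0 * A 0 0 + A 0 1 * A 1 0 = -1 := by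
  simp only [← Matrix.ext_iff, Fin.forall_fin_two, Matrix.mul_apply, Fin.sum_univ_two,
    Matrix.neg_apply, Matrix.one_apply_eq, Matrix.one_apply_ne, ne_eq, zero_ne_one,
    one_ne_zero, not_false_eq_true, neg_zero] at h
  obtain ⟨⟨h00, -⟩, h10, -⟩ := h
  refine ⟨?_, h00⟩
  by_contra hd
  have htr : A 0 0 + A 1 1 ≠ 0 := fun h ↦ hd (by linear_combination h)
  have hc : A 1 0 = 0 := (mul_eq_zero.mp (by linear_combination h10)).resolve_right htr
  simp only [hc, mul_zero, add_zero] at h00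
  linarith [mul_self_nonneg (A 0 0)]

lemma Matrix.eq_one_or_eq_neg_one_of_mul_self_eq_one (hdet : A.det = 1) (h : A * A = 1) :
    A = 1 ∨ A = -1 := by
  simp only [← Matrix.ext_iff, Fin.forall_fin_two, Matrix.mul_apply, Fin.sum_univ_two,
    Matrix.neg_apply, Matrix.one_apply_eq, Matrix.one_apply_ne, ne_eq, zero_ne_one,
    one_ne_zero, not_false_eq_true, neg_zero, Matrix.det_fin_two] at h hdet ⊢
  obtain ⟨⟨h00, h01⟩, h10, -⟩ := h
  have htr : A 0 0 + A 1 1 ≠ 0 := fun htr ↦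
    two_ne_zero (by linear_combination -(h00 + hdet) + A 0 0 * htr : (2 : R) = 0)
  have hb : A 0 1 = 0 := (mul_eq_zero.mp (by linear_combination h01)).resolve_right htr
  have hc : A 1 0 = 0 := (mul_eq_zero.mp (by linear_combination h10)).resolve_right htr
  simp only [hb, hc, mul_zero, add_zero, sub_zero] at h00 hdet
  have hd : A 1 1 = A 0 0 := by linear_combination (-A 1 1) * h00 + A 0 0 * hdet
  rcases mul_self_eq_one_iff.mp h00 with ha | ha <;> simp [ha, hb, hc, hd]

end FinTwo

lemma Int.exists_abs_two_mul_sub_mul_le (a : ℤ) {c : ℤ} (hc : c ≠ 0) :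
    ∃ k : ℤ, |2 * (a - k * c)| ≤ |c| := by
  refine ⟨round ((a : ℚ) / c), ?_⟩
  have hc' : (c : ℚ) ≠ 0 := by exact_mod_cast hc
  have key : ((2 * (a - round ((a : ℚ) / c) * c) : ℤ) : ℚ)
      = 2 * c * ((a : ℚ) / c - round ((a : ℚ) / c)) := by
    push_cast
    field_simp
  have h : |((2 * (a - round ((a : ℚ) / c) * c) : ℤ) : ℚ)| ≤ |(c : ℚ)| := by
    rw [key, abs_mul, abs_mul, abs_two]
    nlinarith [abs_nonneg (c : ℚ), abs_sub_round ((a : ℚ) / c)]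
  exact_mod_cast h

-- `(2a)² ≤ c² ≤ |b c| = 1 + a²`, so `3 a² ≤ 1`.
lemma Int.eq_zero_of_mul_self_add_mul_eq_neg_one {a b c : ℤ} (h : a * a + b * c = -1)
    (hac : |2 * a| ≤ |c|) (hcb : |c| ≤ |b|) : a = 0 := by
  have hbc : |b| * |c| = 1 + a * a := by
    rw [← abs_mul, show b * c = -(1 + a * a) by linarith, abs_neg,
      abs_of_nonneg (by nlinarith [mul_self_nonneg a])]
  have ha2 : 4 * (a * a) ≤ |c| * |c| := by
    nlinarith [abs_mul_abs_self (2 * a), abs_nonneg (2 * a)]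
  nlinarith [abs_nonneg c]

lemma Int.eq_of_mul_self_add_mul_self_eq_one {a b : ℤ} (h : a * a + b * b = 1) :
    (a = 1 ∨ a = -1) ∧ b = 0 ∨ a = 0 ∧ (b = 1 ∨ b = -1) := by
  have ha : -1 ≤ a := by nlinarith
  have ha' : a ≤ 1 := by nlinarith
  interval_cases a
  · exact Or.inl ⟨Or.inr rfl, by simpa using h⟩
  · exact Or.inr ⟨rfl, mul_self_eq_one_iff.mp (by simpa using h)⟩
  · exact Or.inl ⟨Or.inl rfl, by simpa using h⟩

lemma Subgroup.map_conj_le_centralizer {G : Type*} [Group G] {H : Subgroup G}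
    [IsMulCommutative H] {a : G} (ha : a ∈ H) (g : G) :
    H.map (MulAut.conj g).toMonoidHom ≤ Subgroup.centralizer {g * a * g⁻¹} := by
  calc H.map (MulAut.conj g).toMonoidHom
      ≤ (Subgroup.centralizer {a}).map (MulAut.conj g).toMonoidHom :=
        Subgroup.map_mono ((Subgroup.le_centralizer H).trans
          (Subgroup.centralizer_le (Set.singleton_subset_iff.mpr ha)))
    _ ≤ Subgroup.centralizer {g * a * g⁻¹} := by
        simpa using Subgroup.map_centralizer_le_centralizer_image {a} (MulAut.conj g).toMonoidHom

namespace GL2Z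

lemma ext_iff_fin_two {M N : GL2Z} :
    M = N ↔ M.val 0 0 = N.val 0 0 ∧ M.val 0 1 = N.val 0 1 ∧ M.val 1 0 = N.val 1 0 ∧
      M.val 1 1 = N.val 1 1 := by
  rw [Units.ext_iff, ← Matrix.ext_iff, Fin.forall_fin_two, Fin.forall_fin_two, Fin.forall_fin_two]
  tauto

lemma mem_center_iff {M : GL2Z} : M ∈ Subgroup.center GL2Z ↔ M = 1 ∨ M = -1 := by
  rw [GeneralLinearGroup.center_eq_range_scalar]
  constructor
  · rintro ⟨u, rfl⟩
    rcases Int.units_eq_one_or u with rfl | rfl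
    · simp
    · right; ext i j; simp
  · rintro (rfl | rfl)
    · exact ⟨1, map_one _⟩
    · exact ⟨-1, by ext i j; simp⟩

lemma det_fin_two_eq_one_or_eq_neg_one (M : GL2Z) :
    M.val 0 0 * M.val 1 1 - M.val 0 1 * M.val 1 0 = 1 ∨
      M.val 0 0 * M.val 1 1 - M.val 0 1 * M.val 1 0 = -1 := by
  rw [← Matrix.det_fin_two, ← GeneralLinearGroup.val_det_apply]
  rcases Int.units_eq_one_or (GeneralLinearGroup.det M) with h | h <;> simp [h]

lemma val_mul_self_eq_neg_one {M : GL2Z} (hM : M * M = -1) : M.val * M.val = -1 := by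
  simpa [Units.ext_iff] using hM

lemma conj_mul_self_eq_neg_one {M : GL2Z} (hM : M * M = -1) (X : GL2Z) :
    X * M * X⁻¹ * (X * M * X⁻¹) = -1 := by
  simp [conj_mul, hM]

lemma val_conj_T_zpow (k : ℤ) (M : GL2Z) :
    (SpecialLinearGroup.toGL (ModularGroup.T ^ k) * M *
        (SpecialLinearGroup.toGL (ModularGroup.T ^ k))⁻¹).val =
      !![M.val 0 0 + k * M.val 1 0, M.val 0 1 + k * (M.val 1 1 - M.val 0 0) - k * k * M.val 1 0;
        M.val 1 0, M.val 1 1 - k * M.val 1 0] := by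
  rw [← map_inv, ← _root_.zpow_neg, Units.val_mul, Units.val_mul,
    SpecialLinearGroup.coe_GL_coe_matrix, SpecialLinearGroup.coe_GL_coe_matrix,
    ModularGroup.coe_T_zpow, ModularGroup.coe_T_zpow]
  ext i j
  fin_cases i <;> fin_cases j <;>
    simp [Matrix.mul_apply, Matrix.vecMul, dotProduct, Fin.sum_univ_two] <;> ring

lemma val_conj_Smat (M : GL2Z) :
    (Smat * M * Smat⁻¹).val = !![M.val 1 1, M.val 1 0; M.val 0 1, M.val 0 0] := by
  rw [Units.val_mul, Units.val_mul]
  ext i j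
  fin_cases i <;> fin_cases j <;>
    simp [Smat, Matrix.mul_apply, Matrix.vecMul, dotProduct, Fin.sum_univ_two]

lemma exists_isConj_abs_two_mul_le (M : GL2Z) (hc : M.val 1 0 ≠ 0) :
    ∃ M₁ : GL2Z, IsConj M M₁ ∧ M₁.val 1 0 = M.val 1 0 ∧ |2 * M₁.val 0 0| ≤ |M.val 1 0| := by
  obtain ⟨k, hk⟩ := Int.exists_abs_two_mul_sub_mul_le (M.val 0 0) hc
  have hval := val_conj_T_zpow (-k) M
  refine ⟨_, isConj_iff.mpr ⟨_, rfl⟩, by rw [hval]; simp, ?_⟩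
  rw [hval]
  simpa [sub_eq_add_neg] using hk

lemma eq_Tmat_or_eq_neg_Tmat {M : GL2Z} (hM : M * M = -1)
    (hac : |2 * M.val 0 0| ≤ |M.val 1 0|) (hcb : |M.val 1 0| ≤ |M.val 0 1|) :
    M = Tmat ∨ M = -Tmat := by
  obtain ⟨hd, hsq⟩ := Matrix.fin_two_entries_of_mul_self_eq_neg_one (val_mul_self_eq_neg_one hM)
  have ha := Int.eq_zero_of_mul_self_add_mul_eq_neg_one hsq hac hcb
  rw [ha, mul_zero, zero_add] at hsq
  rcases Int.eq_one_or_neg_one_of_mul_eq_neg_one' hsq with ⟨hb, hc⟩ | ⟨hb, hc⟩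
  · exact Or.inr (ext_iff_fin_two.mpr (by simp [Tmat, ha, hb, hc, hd]))
  · exact Or.inl (ext_iff_fin_two.mpr (by simp [Tmat, ha, hb, hc, hd]))

lemma exists_isConj_natAbs_lt_or_isConj_Tmat (M : GL2Z) (hM : M * M = -1) :
    (∃ M' : GL2Z, IsConj M M' ∧ M' * M' = -1 ∧ (M'.val 1 0).natAbs < (M.val 1 0).natAbs) ∨
      IsConj M Tmat ∨ IsConj M (-Tmat) := by
  obtain ⟨-, hsq⟩ := Matrix.fin_two_entries_of_mul_self_eq_neg_one (val_mul_self_eq_neg_one hM)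
  have hc : M.val 1 0 ≠ 0 := fun hc ↦ by
    rw [hc, mul_zero, add_zero] at hsq
    nlinarith [mul_self_nonneg (M.val 0 0)]
  obtain ⟨M₁, hconj, h10, hac⟩ := exists_isConj_abs_two_mul_le M hc
  obtain ⟨X, rfl⟩ := isConj_iff.mp hconj
  have hM₁ := conj_mul_self_eq_neg_one hM X
  rcases lt_or_ge ((X * M * X⁻¹).val 0 1).natAbs (M.val 1 0).natAbs with hlt | hge
  · refine Or.inl ⟨Smat * (X * M * X⁻¹) * Smat⁻¹, hconj.trans (isConj_iff.mpr ⟨_, rfl⟩),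
      conj_mul_self_eq_neg_one hM₁ _, ?_⟩
    rw [val_conj_Smat]
    simpa using hlt
  · rw [← h10] at hac hge
    have hcb : |(X * M * X⁻¹).val 1 0| ≤ |(X * M * X⁻¹).val 0 1| := by
      rw [Int.abs_eq_natAbs, Int.abs_eq_natAbs]
      exact_mod_cast hge
    rcases eq_Tmat_or_eq_neg_Tmat hM₁ hac hcb with h | h
    · exact Or.inr (Or.inl (h ▸ hconj))
    · exact Or.inr (Or.inr (h ▸ hconj))

lemma isConj_Tmat_or_neg_Tmat_of_mul_self_eq_neg_one (M : GL2Z) (hM : M * M = -1) :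
    IsConj M Tmat ∨ IsConj M (-Tmat) := by
  rcases exists_isConj_natAbs_lt_or_isConj_Tmat M hM with ⟨M', hconj, hM', _⟩ | h
  · exact (isConj_Tmat_or_neg_Tmat_of_mul_self_eq_neg_one M' hM').imp hconj.trans hconj.trans
  · exact h
termination_by (M.val 1 0).natAbs

lemma isConj_neg_Tmat_Tmat : IsConj (-Tmat) Tmat :=
  isConj_iff.mpr ⟨Nmat, by ext i j; fin_cases i <;> fin_cases j <;> rfl⟩

lemma isConj_Tmat_of_mul_self_eq_neg_one {M : GL2Z} (hM : M * M = -1) : IsConj M Tmat :=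
  (isConj_Tmat_or_neg_Tmat_of_mul_self_eq_neg_one M hM).elim id (·.trans isConj_neg_Tmat_Tmat)

lemma eq_of_commute_Tmat {M : GL2Z} (h : Tmat * M = M * Tmat) :
    M = 1 ∨ M = -1 ∨ M = Tmat ∨ M = -Tmat := by
  have e := congrArg Units.val h
  simp only [Units.val_mul, ← Matrix.ext_iff, Fin.forall_fin_two, Matrix.mul_apply,
    Fin.sum_univ_two, Tmat, of_apply, cons_val', cons_val_zero, cons_val_one, cons_val_fin_one,
    zero_mul, one_mul, neg_mul, zero_add, add_zero, mul_zero, mul_one, mul_neg, neg_inj] at e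
  have hc : M.val 1 0 = -M.val 0 1 := by linarith [e.1.1]
  have hd : M.val 1 1 = M.val 0 0 := e.1.2
  have hsq : M.val 0 0 * M.val 0 0 + M.val 0 1 * M.val 0 1 = 1 := by
    rcases det_fin_two_eq_one_or_eq_neg_one M with hdet | hdet <;> rw [hc, hd] at hdet <;>
      nlinarith [mul_self_nonneg (M.val 0 0), mul_self_nonneg (M.val 0 1)]
  rcases Int.eq_of_mul_self_add_mul_self_eq_one hsq with ⟨ha | ha, hb⟩ | ⟨ha, hb | hb⟩ <;>
    simp [ext_iff_fin_two, Tmat, ha, hb, hc, hd]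

lemma eq_of_anticommute_Tmat {M : GL2Z} (h : Tmat * M = -(M * Tmat)) :
    M = Smat ∨ M = -Smat ∨ M = Nmat ∨ M = -Nmat := by
  have e := congrArg Units.val h
  simp only [Units.val_mul, Units.val_neg, ← Matrix.ext_iff, Fin.forall_fin_two, Matrix.mul_apply,
    Matrix.neg_apply, Fin.sum_univ_two, Tmat, of_apply, cons_val', cons_val_zero, cons_val_one,
    cons_val_fin_one, zero_mul, one_mul, neg_mul, zero_add, add_zero, mul_zero, mul_one, mul_neg,
    neg_inj, neg_neg] at e
  have hc : M.val 1 0 = M.val 0 1 := e.1.1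
  have hd : M.val 1 1 = -M.val 0 0 := by linarith [e.1.2]
  have hsq : M.val 0 0 * M.val 0 0 + M.val 0 1 * M.val 0 1 = 1 := by
    rcases det_fin_two_eq_one_or_eq_neg_one M with hdet | hdet <;> rw [hc, hd] at hdet <;>
      nlinarith [mul_self_nonneg (M.val 0 0), mul_self_nonneg (M.val 0 1)]
  rcases Int.eq_of_mul_self_add_mul_self_eq_one hsq with ⟨ha | ha, hb⟩ | ⟨ha, hb | hb⟩ <;>
    simp [ext_iff_fin_two, Smat, Nmat, ha, hb, hc, hd]

end GL2Z

lemma cls_one : cls 1 = 1 := rfl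

lemma cls_mul (A B : GL2Z) : cls A * cls B = cls (A * B) := rfl

lemma cls_eq_cls_iff {A B : GL2Z} : cls A = cls B ↔ B = A ∨ B = -A := by
  rw [cls, cls, QuotientGroup.eq, GL2Z.mem_center_iff, inv_mul_eq_one, inv_mul_eq_iff_eq_mul,
    mul_neg_one, eq_comm]

lemma cls_neg (A : GL2Z) : cls (-A) = cls A :=
  cls_eq_cls_iff.mpr (Or.inr (neg_neg A).symm)

def detPGL : PGL2Z →* ℤˣ :=
  QuotientGroup.lift _ GeneralLinearGroup.det fun M hM ↦ by
    rcases GL2Z.mem_center_iff.mp hM with rfl | rfl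
    · exact map_one _
    · ext; simp [Matrix.det_neg]

lemma detPGL_cls (M : GL2Z) : detPGL (cls M) = GeneralLinearGroup.det M := rfl

lemma exists_orderOf_eq_two_detPGL_eq_one (H : Subgroup PGL2Z) (hH : Nat.card H = 4) :
    ∃ a ∈ H, orderOf a = 2 ∧ detPGL a = 1 := by
  let K := (detPGL.comp H.subtype).ker
  have hindex : K.index ≤ 2 := by
    rw [Subgroup.index_ker]
    exact (Subgroup.card_le_card_group _).trans_eq
      (Nat.card_eq_fintype_card.trans Fintype.card_units_int)
  have hK : 2 ∣ Nat.card K := by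
    have hmul := K.card_mul_index
    rw [hH] at hmul
    interval_cases K.index <;> omega
  have : Finite H := Nat.finite_of_card_ne_zero (by omega)
  obtain ⟨x, hx⟩ := exists_prime_orderOf_dvd_card' 2 hK
  exact ⟨x, (x : H).2, by rw [Subgroup.orderOf_coe, Subgroup.orderOf_coe, hx], x.2⟩

lemma isConj_cls_Tmat_of_orderOf_eq_two {a : PGL2Z} (ha : orderOf a = 2) (hdet : detPGL a = 1) :
    IsConj a (cls Tmat) := by
  obtain ⟨M, rfl⟩ : ∃ M, cls M = a := QuotientGroup.mk_surjective a
  have hdetM : M.val.det = 1 := by simpa [detPGL_cls, Units.ext_iff] using hdet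
  have hsq : M * M ∈ Subgroup.center GL2Z := by
    have h := pow_orderOf_eq_one (cls M)
    rw [ha, pow_two] at h
    exact (QuotientGroup.eq_one_iff _).mp h
  rcases GL2Z.mem_center_iff.mp hsq with hsq | hsq
  · have hval : M.val * M.val = 1 := by simpa [Units.ext_iff] using hsq
    have hM : cls M = 1 := by
      rcases Matrix.eq_one_or_eq_neg_one_of_mul_self_eq_one hdetM hval with h | h
      · rw [show M = 1 from Units.ext h, cls_one]
      · rw [show M = -1 from Units.ext (by simpa using h), cls_neg, cls_one]
    simp [hM] at ha
  · exact (QuotientGroup.mk' _).map_isConj (GL2Z.isConj_Tmat_of_mul_self_eq_neg_one hsq)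

lemma centralizer_cls_Tmat_subset :
    (Subgroup.centralizer {cls Tmat} : Set PGL2Z) ⊆ {1, cls Smat, cls Nmat, cls Tmat} := by
  intro x hx
  obtain ⟨M, rfl⟩ : ∃ M, cls M = x := QuotientGroup.mk_surjective x
  have hc := Subgroup.mem_centralizer_singleton_iff.mp hx
  rw [cls_mul, cls_mul, cls_eq_cls_iff] at hc
  rcases hc with hc | hc
  · rcases GL2Z.eq_of_commute_Tmat hc with rfl | rfl | rfl | rfl <;> simp [cls_neg, cls_one]
  · rcases GL2Z.eq_of_anticommute_Tmat hc with rfl | rfl | rfl | rfl <;> simp [cls_neg]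

instance finite_centralizer_cls_Tmat : Finite (Subgroup.centralizer {cls Tmat}) :=
  ((Set.toFinite _).subset centralizer_cls_Tmat_subset).to_subtype

lemma card_centralizer_cls_Tmat_le : Nat.card (Subgroup.centralizer {cls Tmat}) ≤ 4 := by
  classical
  rw [← SetLike.coe_sort_coe, Nat.card_coe_set_eq]
  refine (Set.ncard_le_ncard centralizer_cls_Tmat_subset (Set.toFinite _)).trans ?_
  rw [← Finset.coe_pair, ← Finset.coe_insert, ← Finset.coe_insert, Set.ncard_coe_finset]
  exact Finset.card_le_four

lemma cls_mem_centralizer_cls_Tmat {M : GL2Z} (h : Tmat * M = -(M * Tmat)) :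
    cls M ∈ Subgroup.centralizer {cls Tmat} :=
  Subgroup.mem_centralizer_singleton_iff.mpr (cls_eq_cls_iff.mpr (Or.inr h))

lemma closure_cls_Smat_cls_Nmat_eq_centralizer :
    Subgroup.closure {cls Smat, cls Nmat} = Subgroup.centralizer {cls Tmat} := by
  refine le_antisymm (Subgroup.closure_le _ |>.mpr ?_) fun x hx ↦ ?_
  · rintro _ (rfl | rfl) <;> exact cls_mem_centralizer_cls_Tmat (by decide)
  · have hS : cls Smat ∈ Subgroup.closure {cls Smat, cls Nmat} := Subgroup.subset_closure (by simp)
    have hN : cls Nmat ∈ Subgroup.closure {cls Smat, cls Nmat} := Subgroup.subset_closure (by simp)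
    rcases centralizer_cls_Tmat_subset hx with rfl | rfl | rfl | rfl
    · exact one_mem _
    · exact hS
    · exact hN
    · have hT : cls Smat * cls Nmat = cls Tmat := cls_eq_cls_iff.mpr (Or.inr (by decide))
      exact hT ▸ mul_mem hS hN

/-- Every subgroup of PGL(2,ℤ) of order 4 is conjugate to G₄ = ⟨[S],[N]⟩. -/
theorem stmt_3 (H : Subgroup PGL2Z) (hH : Nat.card H = 4) :
    ∃ g : PGL2Z,
      Subgroup.map (MulAut.conj g).toMonoidHom H = Subgroup.closure {cls Smat, cls Nmat} := by
  obtain ⟨a, haH, ha, hdet⟩ := exists_orderOf_eq_two_detPGL_eq_one H hH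
  obtain ⟨g, hg⟩ := isConj_iff.mp (isConj_cls_Tmat_of_orderOf_eq_two ha hdet)
  have : IsMulCommutative H := IsPGroup.isMulCommutative_of_card_eq_prime_sq (p := 2) hH
  refine ⟨g, ?_⟩
  rw [closure_cls_Smat_cls_Nmat_eq_centralizer]
  refine Subgroup.eq_of_le_of_card_ge (hg ▸ Subgroup.map_conj_le_centralizer haH g) ?_
  rw [Subgroup.card_map_of_injective (MulAut.conj g).injective, hH]
  exact card_centralizer_cls_Tmat_le
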